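/- Let G = (V, E) be an undirected multigraph with terminal set T ⊆ V. Then there exists a hypergraph H' = (T, E') on vertex set T such that λ_{H'}(u,v) = κ'_{(G,T)}(u,v) for all distinct u, v ∈ T. -/

import Mathlib

/-!
For every element-connectivity instance `(G, T)` there is a hypergraph `H'` on
the vertex set `T` whose local hyperedge-connectivities realize the pairwise
element-connectivities of `(G, T)`.

A multigraph on `V` is a finite multiset `E : Multiset (Sym2 V)` of unordered
pairs of distinct vertices.  A hypergraph on the terminal set `T` is a finite
multiset of subsets of `T` (as `Finset`s of the subtype `↥T`), each of
cardinality at least 2.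
-/

attribute [local instance] Classical.propDecidable

noncomputable section

/-- One adjacency step in the multigraph `E`, avoiding the deleted vertex set `Fv`. -/
def Adj {V : Type*} (E : Multiset (Sym2 V)) (Fv : Set V) (a b : V) : Prop :=
  s(a, b) ∈ E ∧ a ∉ Fv ∧ b ∉ Fv

/-- `u` and `v` lie in the same connected component of `E` after deleting the
vertices in `Fv`. -/
def Connects {V : Type*} (E : Multiset (Sym2 V)) (Fv : Set V) (u v : V) : Prop :=
  Relation.ReflTransGen (Adj E Fv) u v

/-- Element-connectivity `κ'_{(G,T)}(u,v)`: minimum cardinality of a set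
`F = Fv ∪ Fe` of non-terminal vertices and edges whose deletion disconnects
`u` from `v`. -/
def elemConn {V : Type*} (E : Multiset (Sym2 V)) (T : Set V) (u v : V) : ℕ :=
  sInf {n | ∃ (Fv : Finset V) (Fe : Multiset (Sym2 V)), (↑Fv : Set V) ⊆ Tᶜ ∧ Fe ≤ E ∧
    n = Fv.card + Multiset.card Fe ∧ ¬ Connects (E - Fe) (↑Fv) u v}

/-- `|δ_E(S)|`: the number of hyperedges (with multiplicity) having at least one
vertex in `S` and at least one vertex outside `S`. -/
def hCut {W : Type*} [DecidableEq W] (E : Multiset (Finset W)) (S : Finset W) : ℕ :=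
  Multiset.card (E.filter (fun e => (e ∩ S).Nonempty ∧ (e \ S).Nonempty))

/-- The local connectivity `λ_E(x,y) = min { |δ_E(S)| : |S ∩ {x,y}| = 1 }`. -/
def lamH {W : Type*} [DecidableEq W] (E : Multiset (Finset W)) (x y : W) : ℕ :=
  sInf {n | ∃ S : Finset W, ((x ∈ S ∧ y ∉ S) ∨ (y ∈ S ∧ x ∉ S)) ∧ n = hCut E S}

section Aux

variable {V : Type*}

lemma adj_symm (E : Multiset (Sym2 V)) (Fv : Set V) : Symmetric (Adj E Fv) := by
  rintro a b ⟨he, ha, hb⟩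
  exact ⟨by rwa [Sym2.eq_swap], hb, ha⟩

lemma connects_symm {E : Multiset (Sym2 V)} {Fv : Set V} {u v : V}
    (h : Connects E Fv u v) : Connects E Fv v u :=
  haveI : Std.Symm (Adj E Fv) := ⟨adj_symm E Fv⟩
  Std.Symm.symm (r := Relation.ReflTransGen (Adj E Fv)) _ _ h

lemma connects_zero {Fv : Set V} {u v : V}
    (h : Connects (0 : Multiset (Sym2 V)) Fv u v) : u = v := by
  induction h with
  | refl => rfl
  | tail _ h2 _ => exact absurd h2.1 (Multiset.notMem_zero _)

lemma elemConn_mem_nonempty (E : Multiset (Sym2 V)) (T : Set V) {u v : V} (h : u ≠ v) :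
    {n | ∃ (Fv : Finset V) (Fe : Multiset (Sym2 V)), (↑Fv : Set V) ⊆ Tᶜ ∧ Fe ≤ E ∧
      n = Fv.card + Multiset.card Fe ∧ ¬ Connects (E - Fe) (↑Fv) u v}.Nonempty := by
  refine ⟨Multiset.card E, ∅, E, by simp, le_rfl, by simp, fun hc => h ?_⟩
  rw [tsub_self] at hc
  exact connects_zero hc

lemma elemConn_symm (E : Multiset (Sym2 V)) (T : Set V) (u v : V) :
    elemConn E T u v = elemConn E T v u := by
  unfold elemConn
  congr 1
  ext n
  constructor <;> rintro ⟨Fv, Fe, h1, h2, h3, h4⟩ <;>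
    exact ⟨Fv, Fe, h1, h2, h3, fun hc => h4 (connects_symm hc)⟩

lemma elemConn_triangle (E : Multiset (Sym2 V)) (T : Set V) {u v : V} (w : V) (h : u ≠ v) :
    min (elemConn E T u w) (elemConn E T w v) ≤ elemConn E T u v := by
  obtain ⟨Fv, Fe, h1, h2, h3, h4⟩ := Nat.sInf_mem (elemConn_mem_nonempty E T h)
  by_cases hcw : Connects (E - Fe) (↑Fv) u w
  · refine le_trans (min_le_right _ _) (Nat.sInf_le ?_)
    exact ⟨Fv, Fe, h1, h2, h3, fun hc => h4 (hcw.trans hc)⟩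
  · exact le_trans (min_le_left _ _) (Nat.sInf_le ⟨Fv, Fe, h1, h2, h3, hcw⟩)

end Aux

section HCutAux

variable {W : Type*} [DecidableEq W]

lemma hCut_add (E₁ E₂ : Multiset (Finset W)) (S : Finset W) :
    hCut (E₁ + E₂) S = hCut E₁ S + hCut E₂ S := by
  simp [hCut, Multiset.filter_add]

lemma hCut_eq_zero {Es : Multiset (Finset W)} {S : Finset W}
    (h : ∀ e ∈ Es, ¬((e ∩ S).Nonempty ∧ (e \ S).Nonempty)) : hCut Es S = 0 := by
  unfold hCut
  rw [Multiset.filter_eq_nil.mpr h, Multiset.card_zero]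

lemma hCut_replicate (m : ℕ) (e : Finset W) (S : Finset W) :
    hCut (Multiset.replicate m e) S =
      if (e ∩ S).Nonempty ∧ (e \ S).Nonempty then m else 0 := by
  by_cases h : (e ∩ S).Nonempty ∧ (e \ S).Nonempty
  · rw [if_pos h]
    unfold hCut
    rw [Multiset.filter_eq_self.mpr, Multiset.card_replicate]
    intro a ha
    rw [Multiset.eq_of_mem_replicate ha]
    exact h
  · rw [if_neg h]
    exact hCut_eq_zero fun a ha => by rw [Multiset.eq_of_mem_replicate ha]; exact h

lemma pair_cross {x y : W} (hxy : x ≠ y) (S : Finset W) :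
    ((({x, y} : Finset W) ∩ S).Nonempty ∧ (({x, y} : Finset W) \ S).Nonempty) ↔
      ((x ∈ S ∧ y ∉ S) ∨ (y ∈ S ∧ x ∉ S)) := by
  constructor
  · rintro ⟨⟨a, ha⟩, ⟨b, hb⟩⟩
    simp only [Finset.mem_inter, Finset.mem_sdiff, Finset.mem_insert,
      Finset.mem_singleton] at ha hb
    rcases ha with ⟨(rfl | rfl), haS⟩ <;> rcases hb with ⟨(rfl | rfl), hbS⟩ <;> tauto
  · rintro (⟨hx, hy⟩ | ⟨hy, hx⟩)
    · exact ⟨⟨x, by simp [hx]⟩, ⟨y, by simp [hy]⟩⟩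
    · exact ⟨⟨y, by simp [hy]⟩, ⟨x, by simp [hx]⟩⟩

end HCutAux

/-- Any symmetric function with the min-triangle property on a finite set is
realized as the local connectivity function of a multigraph of pair-hyperedges
(an ultrametric-style recursive construction of a maximum spanning tree). -/
lemma treeRealize {W : Type*} [DecidableEq W] (lam : W → W → ℕ)
    (hsym : ∀ u v, lam u v = lam v u)
    (htri : ∀ u v w : W, u ≠ v → min (lam u w) (lam w v) ≤ lam u v) :
    ∀ A : Finset W, A.Nonempty →
      ∃ (E' : Multiset (Finset W)) (root : W), root ∈ A ∧
        (∀ e ∈ E', ∃ x y, x ∈ A ∧ y ∈ A ∧ x ≠ y ∧ e = {x, y}) ∧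
        ∀ u ∈ A, ∀ v ∈ A, u ≠ v →
          (∀ S : Finset W, ((u ∈ S ∧ v ∉ S) ∨ (v ∈ S ∧ u ∉ S)) → lam u v ≤ hCut E' S) ∧
          (∃ S : Finset W, S ⊆ A ∧ root ∉ S ∧ ((u ∈ S ∧ v ∉ S) ∨ (v ∈ S ∧ u ∉ S)) ∧
            hCut E' S = lam u v) := by
  intro A
  induction A using Finset.strongInduction with
  | _ A ih =>
  intro hA
  obtain ⟨a0, ha0⟩ := hA
  by_cases hcard : A.card ≤ 1
  · refine ⟨0, a0, ha0, by simp, ?_⟩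
    intro u hu v hv huv
    exact absurd (Finset.card_le_one.mp hcard u hu v hv) huv
  · push_neg at hcard
    have hod : A.offDiag.Nonempty := by
      obtain ⟨a, ha, b, hb, hab⟩ := Finset.one_lt_card.mp hcard
      exact ⟨(a, b), Finset.mem_offDiag.mpr ⟨ha, hb, hab⟩⟩
    have hQ : (A.offDiag.image fun p => lam p.1 p.2).Nonempty := hod.image _
    set m : ℕ := (A.offDiag.image fun p => lam p.1 p.2).min' hQ with hm
    have hmin_le : ∀ u ∈ A, ∀ v ∈ A, u ≠ v → m ≤ lam u v := by
      intro u hu v hv huv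
      exact Finset.min'_le _ _ (Finset.mem_image.mpr
        ⟨(u, v), Finset.mem_offDiag.mpr ⟨hu, hv, huv⟩, rfl⟩)
    obtain ⟨pq, hpq, hpqval⟩ := Finset.mem_image.mp (Finset.min'_mem _ hQ)
    obtain ⟨hp, hq, hpq'⟩ := Finset.mem_offDiag.mp hpq
    set C : Finset W := A.filter (fun v => v = a0 ∨ m < lam a0 v) with hC
    set B : Finset W := A \ C with hB
    have ha0C : a0 ∈ C := Finset.mem_filter.mpr ⟨ha0, Or.inl rfl⟩
    have hCsubA : C ⊆ A := Finset.filter_subset _ _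
    have hBsubA : B ⊆ A := Finset.sdiff_subset
    have hCmem : ∀ u ∈ C, u = a0 ∨ m < lam a0 u := fun u hu => (Finset.mem_filter.mp hu).2
    have hBmem : ∀ v ∈ B, v ≠ a0 ∧ lam a0 v ≤ m := by
      intro v hv
      have h2 := (Finset.mem_sdiff.mp hv).2
      rw [hC, Finset.mem_filter] at h2
      push_neg at h2
      exact h2 ((Finset.mem_sdiff.mp hv).1)
    have hnotB : ∀ u ∈ C, u ∉ B := fun u hu h => (Finset.mem_sdiff.mp h).2 hu
    have hCC : ∀ u ∈ C, ∀ v ∈ C, u ≠ v → m < lam u v := by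
      intro u hu v hv huv
      rcases hCmem u hu with rfl | hu'
      · rcases hCmem v hv with rfl | hv'
        · exact absurd rfl huv
        · exact hv'
      · rcases hCmem v hv with rfl | hv'
        · rw [hsym]; exact hu'
        · calc m < min (lam u a0) (lam a0 v) := lt_min (by rw [hsym u a0]; exact hu') hv'
            _ ≤ lam u v := htri u v a0 huv
    have hCB : ∀ u ∈ C, ∀ v ∈ B, lam u v = m := by
      intro u hu v hv
      obtain ⟨hva0, hvle⟩ := hBmem v hv
      have huv : u ≠ v := fun h => hnotB u hu (h ▸ hv)
      refine le_antisymm ?_ (hmin_le u (hCsubA hu) v (hBsubA hv) huv)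
      by_contra hgt
      push_neg at hgt
      rcases hCmem u hu with rfl | hu'
      · exact absurd hgt (not_lt.mpr hvle)
      · have h5 : min (lam a0 u) (lam u v) ≤ lam a0 v := htri a0 v u (Ne.symm hva0)
        have h6 : m < lam a0 v := lt_of_lt_of_le (lt_min hu' hgt) h5
        exact absurd h6 (not_lt.mpr hvle)
    have hBne : B.Nonempty := by
      by_contra hBe
      rw [Finset.not_nonempty_iff_eq_empty] at hBe
      have hmemC : ∀ z ∈ A, z ∈ C := by
        intro z hz
        by_contra hzC
        have hzB : z ∈ B := Finset.mem_sdiff.mpr ⟨hz, hzC⟩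
        rw [hBe] at hzB
        exact Finset.notMem_empty z hzB
      exact absurd hpqval (ne_of_gt (hCC pq.1 (hmemC _ hp) pq.2 (hmemC _ hq) hpq'))
    have hCssub : C ⊂ A := by
      obtain ⟨b, hb⟩ := hBne
      exact (Finset.ssubset_iff_of_subset hCsubA).mpr
        ⟨b, hBsubA hb, (Finset.mem_sdiff.mp hb).2⟩
    have hBssub : B ⊂ A :=
      (Finset.ssubset_iff_of_subset hBsubA).mpr ⟨a0, ha0, hnotB a0 ha0C⟩
    obtain ⟨Ec, x, hxC, hEcShape, hc⟩ := ih C hCssub ⟨a0, ha0C⟩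
    obtain ⟨Eb, y, hyB, hEbShape, hb⟩ := ih B hBssub hBne
    have hxy : x ≠ y := fun h => hnotB x hxC (h ▸ hyB)
    have hEcC : ∀ e ∈ Ec, ∀ a ∈ e, a ∈ C := by
      intro e he a ha
      obtain ⟨x', y', hx', hy', _, rfl⟩ := hEcShape e he
      rcases Finset.mem_insert.mp ha with rfl | ha
      · exact hx'
      · rw [Finset.mem_singleton.mp ha]; exact hy'
    have hEbB : ∀ e ∈ Eb, ∀ a ∈ e, a ∈ B := by
      intro e he a ha
      obtain ⟨x', y', hx', hy', _, rfl⟩ := hEbShape e he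
      rcases Finset.mem_insert.mp ha with rfl | ha
      · exact hx'
      · rw [Finset.mem_singleton.mp ha]; exact hy'
    set R : Multiset (Finset W) := Multiset.replicate m ({x, y} : Finset W) with hR
    set E' : Multiset (Finset W) := Ec + Eb + R with hE'
    have hsplit : ∀ S : Finset W, hCut E' S = hCut Ec S + hCut Eb S + hCut R S := by
      intro S
      rw [hE', hCut_add, hCut_add]
    have hEb_zero_of_subC : ∀ S : Finset W, S ⊆ C → hCut Eb S = 0 := by
      intro S hS
      refine hCut_eq_zero ?_
      rintro e he ⟨⟨a, ha⟩, -⟩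
      have hm2 := Finset.mem_inter.mp ha
      exact hnotB a (hS hm2.2) (hEbB e he a hm2.1)
    have hEc_zero_of_subB : ∀ S : Finset W, S ⊆ B → hCut Ec S = 0 := by
      intro S hS
      refine hCut_eq_zero ?_
      rintro e he ⟨⟨a, ha⟩, -⟩
      have hm2 := Finset.mem_inter.mp ha
      exact hnotB a (hEcC e he a hm2.1) (hS hm2.2)
    have hR_zero : ∀ S : Finset W, x ∉ S → y ∉ S → hCut R S = 0 := by
      intro S hxS hyS
      rw [hR, hCut_replicate, if_neg]
      rw [pair_cross hxy]
      tauto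
    have lowCB : ∀ u ∈ C, ∀ v ∈ B, ∀ S : Finset W,
        ((u ∈ S ∧ v ∉ S) ∨ (v ∈ S ∧ u ∉ S)) → m ≤ hCut E' S := by
      intro u hu v hv S hS
      rw [hsplit S]
      by_cases hcross : (x ∈ S ∧ y ∉ S) ∨ (y ∈ S ∧ x ∉ S)
      · have hRm : hCut R S = m := by
          rw [hR, hCut_replicate, if_pos ((pair_cross hxy S).mpr hcross)]
        omega
      · have hiff : x ∈ S ↔ y ∈ S := by tauto
        rcases hS with ⟨huS, hvS⟩ | ⟨hvS, huS⟩
        · by_cases hxS : x ∈ S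
          · have hyS : y ∈ S := hiff.mp hxS
            have hyv : y ≠ v := fun h => hvS (h ▸ hyS)
            have h7 := (hb y hyB v hv hyv).1 S (Or.inl ⟨hyS, hvS⟩)
            have h8 := hmin_le y (hBsubA hyB) v (hBsubA hv) hyv
            omega
          · have hux : u ≠ x := fun h => hxS (h ▸ huS)
            have h7 := (hc u hu x hxC hux).1 S (Or.inl ⟨huS, hxS⟩)
            have h8 := hmin_le u (hCsubA hu) x (hCsubA hxC) hux
            omega
        · by_cases hxS : x ∈ S
          · have hux : u ≠ x := fun h => huS (h ▸ hxS)
            have h7 := (hc u hu x hxC hux).1 S (Or.inr ⟨hxS, huS⟩)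
            have h8 := hmin_le u (hCsubA hu) x (hCsubA hxC) hux
            omega
          · have hyS : y ∉ S := fun h => hxS (hiff.mpr h)
            have hyv : y ≠ v := fun h => hyS (h ▸ hvS)
            have h7 := (hb y hyB v hv hyv).1 S (Or.inr ⟨hvS, hyS⟩)
            have h8 := hmin_le y (hBsubA hyB) v (hBsubA hv) hyv
            omega
    have hcutB : hCut E' B = m := by
      rw [hsplit B]
      have h1 : hCut Ec B = 0 := by
        refine hCut_eq_zero ?_
        rintro e he ⟨⟨a, ha⟩, -⟩
        have hm2 := Finset.mem_inter.mp ha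
        exact hnotB a (hEcC e he a hm2.1) hm2.2
      have h2 : hCut Eb B = 0 := by
        refine hCut_eq_zero ?_
        rintro e he ⟨-, ⟨a, ha⟩⟩
        have hm2 := Finset.mem_sdiff.mp ha
        exact hm2.2 (hEbB e he a hm2.1)
      have h3 : hCut R B = m := by
        rw [hR, hCut_replicate, if_pos ((pair_cross hxy B).mpr (Or.inr ⟨hyB, hnotB x hxC⟩))]
      omega
    refine ⟨E', x, hCsubA hxC, ?_, ?_⟩
    · intro e he
      rw [hE'] at he
      rcases Multiset.mem_add.mp he with he' | heR
      · rcases Multiset.mem_add.mp he' with hec | heb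
        · obtain ⟨x', y', hx', hy', hne, rfl⟩ := hEcShape e hec
          exact ⟨x', y', hCsubA hx', hCsubA hy', hne, rfl⟩
        · obtain ⟨x', y', hx', hy', hne, rfl⟩ := hEbShape e heb
          exact ⟨x', y', hBsubA hx', hBsubA hy', hne, rfl⟩
      · rw [hR] at heR
        rw [Multiset.eq_of_mem_replicate heR]
        exact ⟨x, y, hCsubA hxC, hBsubA hyB, hxy, rfl⟩
    · intro u hu v hv huv
      by_cases huC : u ∈ C
      · by_cases hvC : v ∈ C
        · obtain ⟨hlow, S, hSC, hxS, hsep, hval⟩ := hc u huC v hvC huv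
          constructor
          · intro S' hS'
            have h7 := hlow S' hS'
            rw [hsplit S']
            omega
          · refine ⟨S, hSC.trans hCsubA, hxS, hsep, ?_⟩
            have h1 := hEb_zero_of_subC S hSC
            have h2 := hR_zero S hxS (fun h => hnotB y (hSC h) hyB)
            rw [hsplit S]
            omega
        · have hvB : v ∈ B := Finset.mem_sdiff.mpr ⟨hv, hvC⟩
          constructor
          · intro S hS
            rw [hCB u huC v hvB]
            exact lowCB u huC v hvB S hS
          · refine ⟨B, hBsubA, hnotB x hxC, Or.inr ⟨hvB, hnotB u huC⟩, ?_⟩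
            rw [hcutB, hCB u huC v hvB]
      · have huB : u ∈ B := Finset.mem_sdiff.mpr ⟨hu, huC⟩
        by_cases hvC : v ∈ C
        · constructor
          · intro S hS
            have hlam : lam u v = m := by rw [hsym]; exact hCB v hvC u huB
            rw [hlam]
            rcases hS with h | h
            · exact lowCB v hvC u huB S (Or.inr h)
            · exact lowCB v hvC u huB S (Or.inl h)
          · refine ⟨B, hBsubA, hnotB x hxC, Or.inl ⟨huB, hnotB v hvC⟩, ?_⟩
            rw [hcutB, hsym u v, hCB v hvC u huB]
        · have hvB : v ∈ B := Finset.mem_sdiff.mpr ⟨hv, hvC⟩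
          obtain ⟨hlow, S, hSB, hyS, hsep, hval⟩ := hb u huB v hvB huv
          constructor
          · intro S' hS'
            have h7 := hlow S' hS'
            rw [hsplit S']
            omega
          · refine ⟨S, hSB.trans hBsubA, fun h => hnotB x hxC (hSB h), hsep, ?_⟩
            have h1 := hEc_zero_of_subB S hSB
            have h2 := hR_zero S (fun h => hnotB x hxC (hSB h)) hyS
            rw [hsplit S]
            omega

/-- **Realizing element-connectivity by a hypergraph on the terminals.**
For every multigraph `G` with terminal set `T` there is a hypergraph `H' = (T, E')`
such that `λ_{H'}(u,v) = κ'_{(G,T)}(u,v)` for all distinct terminals `u, v ∈ T`. -/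
theorem exists_hypergraph_realizing_elemConn {V : Type*} [Fintype V] [DecidableEq V]
    (E : Multiset (Sym2 V)) (T : Finset V) (hloop : ∀ e ∈ E, ¬ e.IsDiag) :
    ∃ E' : Multiset (Finset {x : V // x ∈ T}),
      (∀ e ∈ E', 2 ≤ e.card) ∧
      ∀ u v : {x : V // x ∈ T}, u ≠ v →
        lamH E' u v = elemConn E (↑T : Set V) (↑u) (↑v) := by
  by_cases hT : Nonempty {x : V // x ∈ T}
  · have huniv : (Finset.univ : Finset {x : V // x ∈ T}).Nonempty := Finset.univ_nonempty
    obtain ⟨E', root, -, hshape, hmain⟩ :=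
      treeRealize (fun u v : {x : V // x ∈ T} => elemConn E (↑T : Set V) ↑u ↑v)
        (fun u v => elemConn_symm E _ ↑u ↑v)
        (fun u v w huv => elemConn_triangle E _ (↑w) (fun h => huv (Subtype.ext h)))
        Finset.univ huniv
    refine ⟨E', ?_, ?_⟩
    · intro e he
      obtain ⟨x, y, -, -, hxy, rfl⟩ := hshape e he
      rw [Finset.card_pair hxy]
    · intro u v huv
      obtain ⟨hlow, S, -, -, hsep, hval⟩ :=
        hmain u (Finset.mem_univ u) v (Finset.mem_univ v) huv
      unfold lamH
      refine le_antisymm (Nat.sInf_le ⟨S, hsep, hval.symm⟩) ?_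
      refine le_csInf ⟨hCut E' S, S, hsep, rfl⟩ ?_
      rintro n ⟨S', hsep', rfl⟩
      exact hlow S' hsep'
  · refine ⟨0, by simp, ?_⟩
    intro u v huv
    exact absurd ⟨u⟩ hT

end
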